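/- Let X be a nontrivial real Banach space and δ > 0. Then X is weakly δ-average rough if and only if the following holds: whenever E is a finite-dimensional subspace of X, x* is in the closed unit ball B_{X*} of the dual, and ε > 0, there exist functionals x*₁, x*₂ ∈ X* with ‖x*₁‖ ≤ 1+ε and ‖x*₂‖ ≤ 1+ε, and y in the unit sphere S_X, such that x*₁ and x*₂ both agree with x* on E and x*₁(y) − x*₂(y) > δ − ε. -/

import Mathlib

open scoped BigOperators

/-- A Banach space `Z` is `δ`-average rough. -/
def IsAverageRough (Z : Type*) [NormedAddCommGroup Z] (δ : ℝ) : Prop :=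
  ∀ n : ℕ, 0 < n → ∀ x : Fin n → Z, (∀ i, ‖x i‖ = 1) →
    ∀ ε > (0 : ℝ), ∀ η > (0 : ℝ), ∃ y : Z, 0 < ‖y‖ ∧ ‖y‖ < η ∧
      (δ - ε) * ‖y‖ ≤ (1 / (n : ℝ)) * ∑ i, (‖x i + y‖ + ‖x i - y‖) - 2

/-- A Banach space `Z` is `δ`-rough. -/
def IsRough (Z : Type*) [NormedAddCommGroup Z] (δ : ℝ) : Prop :=
  ∀ x : Z, ‖x‖ = 1 →
    ∀ ε > (0 : ℝ), ∀ η > (0 : ℝ), ∃ y : Z, 0 < ‖y‖ ∧ ‖y‖ < η ∧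
      (δ - ε) * ‖y‖ ≤ ‖x + y‖ + ‖x - y‖ - 2

/-- A Banach space `Z` is non-rough if it is `ε`-rough for no `ε > 0`. -/
def NonRough (Z : Type*) [NormedAddCommGroup Z] : Prop :=
  ¬ ∃ ε > (0 : ℝ), IsRough Z ε

/-- A Banach space `Z` is octahedral. -/
def Octahedral (Z : Type*) [NormedAddCommGroup Z] : Prop :=
  ∀ (n : ℕ) (x : Fin n → Z), (∀ i, ‖x i‖ = 1) →
    ∀ ε > (0 : ℝ), ∃ y : Z, ‖y‖ = 1 ∧ ∀ i, 2 - ε ≤ ‖x i + y‖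

/-- A Banach space `Z` is alternatively octahedral. -/
def AlternativelyOctahedral (Z : Type*) [NormedAddCommGroup Z] : Prop :=
  ∀ (n : ℕ) (x : Fin n → Z), (∀ i, ‖x i‖ = 1) →
    ∀ ε > (0 : ℝ), ∃ y : Z, ‖y‖ = 1 ∧ ∀ i, 2 - ε ≤ max ‖x i + y‖ ‖x i - y‖

/-- A Banach space `X` is weakly `δ`-average rough: every non-empty relatively weak*
open subset of the closed unit ball of the dual has diameter at least `δ`. -/
def WeaklyAverageRough (X : Type*) [NormedAddCommGroup X] [NormedSpace ℝ X] (δ : ℝ) : Prop :=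
  ∀ V : Set (WeakDual ℝ X), IsOpen V →
    ∀ U : Set (StrongDual ℝ X),
      U = {f : StrongDual ℝ X | ‖f‖ ≤ 1} ∩
            {f : StrongDual ℝ X | StrongDual.toWeakDual f ∈ V} →
      U.Nonempty → δ ≤ Metric.diam U

/-! For finite-dimensional `E`, restriction to `E` is continuous from the weak* topology to the
norm topology of `E*`, and the sets `{g | ‖(g - f)|_E‖ < η}` form a weak* neighbourhood basis
at `f`. Hence two far-apart functionals of the ball in a small weak* neighbourhood of `f` can be
corrected, by Hahn–Banach and at small cost in norm, to agree with `f` on `E`; conversely,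
extensions of `f|_E` of norm at most `1 + ε`, scaled by `(1 + ε)⁻¹`, lie in any given weak*
neighbourhood of `f` once `ε` is small. -/

open Metric Filter Topology

theorem Metric.exists_lt_dist_of_lt_diam {α : Type*} [PseudoMetricSpace α] {s : Set α}
    (hs : s.Nonempty) {c : ℝ} (h : c < diam s) : ∃ x ∈ s, ∃ y ∈ s, c < dist x y := by
  by_contra! hle
  obtain ⟨x, hx⟩ := hs
  have hc : 0 ≤ c := dist_self x ▸ hle x hx x hx
  exact (diam_le_of_forall_dist_le hc hle).not_gt h

theorem StrongDual.exists_norm_eq_one_lt_apply {E : Type*} [NormedAddCommGroup E]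
    [NormedSpace ℝ E] [Nontrivial E] (f : StrongDual ℝ E) {c : ℝ} (hc : c < ‖f‖) :
    ∃ y : E, ‖y‖ = 1 ∧ c < f y := by
  have hne : ((fun x => ‖f x‖) '' sphere (0 : E) 1).Nonempty :=
    (NormedSpace.sphere_nonempty.mpr zero_le_one).image _
  obtain ⟨-, ⟨x, hx, rfl⟩, hcx⟩ := exists_lt_of_lt_csSup hne (f.sSup_sphere_eq_norm.symm ▸ hc)
  rw [mem_sphere_zero_iff_norm] at hx
  rcases lt_abs.mp hcx with hcx | hcx
  · exact ⟨x, hx, hcx⟩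
  · exact ⟨-x, by rwa [norm_neg], by rwa [map_neg]⟩

theorem StrongDual.exists_extension_dist_eq {𝕜 X : Type*} [NontriviallyNormedField 𝕜]
    [IsRCLikeNormedField 𝕜] [SeminormedAddCommGroup X] [NormedSpace 𝕜 X]
    (E : Submodule 𝕜 X) (f g : StrongDual 𝕜 X) :
    ∃ h : StrongDual 𝕜 X, (∀ x ∈ E, h x = f x) ∧
      dist g h = dist (g.comp E.subtypeL) (f.comp E.subtypeL) := by
  obtain ⟨k, hk, hnorm⟩ := exists_extension_norm_eq E ((f - g).comp E.subtypeL)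
  refine ⟨g + k, fun x hx => ?_, ?_⟩
  · simp [hk ⟨x, hx⟩]
  · rw [dist_self_add_right, hnorm, dist_eq_norm', ContinuousLinearMap.sub_comp]

theorem dist_inv_one_add_smul_self_le {E : Type*} [SeminormedAddCommGroup E] [NormedSpace ℝ E]
    {x : E} (hx : ‖x‖ ≤ 1) {ε : ℝ} (hε : 0 ≤ ε) : dist ((1 + ε)⁻¹ • x) x ≤ ε := by
  have hc : |(1 + ε)⁻¹ - 1| ≤ ε := by
    rw [abs_sub_comm, abs_of_nonneg (by simp [inv_le_one_of_one_le₀, hε])]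
    field_simp
    nlinarith
  calc dist ((1 + ε)⁻¹ • x) x = |(1 + ε)⁻¹ - 1| * ‖x‖ := by
        rw [dist_eq_norm, ← Real.norm_eq_abs, ← norm_smul, sub_smul, one_smul]
    _ ≤ ε * 1 := by gcongr
    _ = ε := mul_one ε

namespace WeakDual

variable {𝕜 X : Type*} [NontriviallyNormedField 𝕜] [NormedAddCommGroup X] [NormedSpace 𝕜 X]

theorem continuous_comp_subtypeL [CompleteSpace 𝕜] (E : Submodule 𝕜 X) [FiniteDimensional 𝕜 E] :
    Continuous fun g : WeakDual 𝕜 X => (toStrongDual g).comp E.subtypeL :=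
  continuous_clm_apply.mpr fun y => eval_continuous (y : X)

theorem exists_dist_comp_subtypeL_lt_mem_of_mem_nhds {V : Set (WeakDual 𝕜 X)} {f : StrongDual 𝕜 X}
    (hV : V ∈ 𝓝 (StrongDual.toWeakDual f)) :
    ∃ E : Submodule 𝕜 X, FiniteDimensional 𝕜 E ∧ ∃ η > 0, ∀ g : StrongDual 𝕜 X,
      dist (g.comp E.subtypeL) (f.comp E.subtypeL) < η → StrongDual.toWeakDual g ∈ V := by
  obtain ⟨t, ht, htV⟩ : V ∈ comap (fun (g : WeakDual 𝕜 X) y => g y) (𝓝 fun y => f y) :=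
    (nhds_induced (fun (g : WeakDual 𝕜 X) y => g y) _).symm ▸ hV
  rw [nhds_pi] at ht
  obtain ⟨I, s, hs, hIs⟩ := Filter.mem_pi'.mp ht
  set E := Submodule.span 𝕜 (I : Set X)
  have hmem : ∀ a : I, ∀ᶠ φ in 𝓝 (f.comp E.subtypeL), φ ⟨a, Submodule.subset_span a.2⟩ ∈ s a :=
    fun a => (continuous_eval_const _).continuousAt.preimage_mem_nhds (hs a)
  obtain ⟨η, hη, hball⟩ := Metric.eventually_nhds_iff.mp (eventually_all.mpr hmem)
  exact ⟨E, FiniteDimensional.span_finset 𝕜 I, η, hη,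
    fun g hg => htV (hIs fun a ha => hball hg ⟨a, ha⟩)⟩

end WeakDual

section

variable {X : Type*} [NormedAddCommGroup X] [NormedSpace ℝ X] {δ : ℝ}

theorem WeaklyAverageRough.exists_extension [Nontrivial X] (h : WeaklyAverageRough X δ)
    (E : Submodule ℝ X) [FiniteDimensional ℝ E] (f : StrongDual ℝ X) (hf : ‖f‖ ≤ 1)
    {ε : ℝ} (hε : 0 < ε) :
    ∃ f₁ f₂ : StrongDual ℝ X, ‖f₁‖ ≤ 1 + ε ∧ ‖f₂‖ ≤ 1 + ε ∧ ∃ y : X, ‖y‖ = 1 ∧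
      (∀ x ∈ E, f₁ x = f x ∧ f₂ x = f x) ∧ δ - ε < f₁ y - f₂ y := by
  set β := ε / 3 with hβ
  set V := (fun g : WeakDual ℝ X => (WeakDual.toStrongDual g).comp E.subtypeL) ⁻¹'
    ball (f.comp E.subtypeL) β
  set U := {g : StrongDual ℝ X | ‖g‖ ≤ 1} ∩ {g | StrongDual.toWeakDual g ∈ V}
  have hfU : f ∈ U := ⟨hf, mem_ball_self (by positivity)⟩
  have hdiam : δ ≤ diam U :=
    h V (isOpen_ball.preimage (WeakDual.continuous_comp_subtypeL E)) U rfl ⟨f, hfU⟩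
  obtain ⟨g₁, ⟨hg₁, hg₁V⟩, g₂, ⟨hg₂, hg₂V⟩, hg⟩ :=
    exists_lt_dist_of_lt_diam ⟨f, hfU⟩ (by linarith : δ - β < diam U)
  obtain ⟨f₁, hf₁E, hf₁g⟩ := StrongDual.exists_extension_dist_eq E f g₁
  obtain ⟨f₂, hf₂E, hf₂g⟩ := StrongDual.exists_extension_dist_eq E f g₂
  replace hf₁g : dist g₁ f₁ < β := hf₁g ▸ hg₁V
  replace hf₂g : dist g₂ f₂ < β := hf₂g ▸ hg₂V
  have hnorm : ∀ {g' f' : StrongDual ℝ X}, ‖g'‖ ≤ 1 → dist g' f' < β → ‖f'‖ ≤ 1 + ε :=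
    fun {g' f'} hg' hgf' => by
      linarith [norm_le_norm_add_norm_sub g' f', dist_eq_norm g' f']
  have hfar : δ - ε < ‖f₁ - f₂‖ := by
    rw [← dist_eq_norm]
    linarith [dist_triangle4 g₁ f₁ f₂ g₂, dist_comm g₂ f₂]
  obtain ⟨y, hy, hfy⟩ := (f₁ - f₂).exists_norm_eq_one_lt_apply hfar
  exact ⟨f₁, f₂, hnorm hg₁ hf₁g, hnorm hg₂ hf₂g, y, hy, fun x hx => ⟨hf₁E x hx, hf₂E x hx⟩, hfy⟩

theorem weaklyAverageRough_of_exists_extension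
    (h : ∀ E : Submodule ℝ X, FiniteDimensional ℝ E →
        ∀ f : StrongDual ℝ X, ‖f‖ ≤ 1 →
          ∀ ε > (0 : ℝ), ∃ f₁ f₂ : StrongDual ℝ X,
            ‖f₁‖ ≤ 1 + ε ∧ ‖f₂‖ ≤ 1 + ε ∧ ∃ y : X, ‖y‖ = 1 ∧
              (∀ x ∈ E, f₁ x = f x ∧ f₂ x = f x) ∧ δ - ε < f₁ y - f₂ y) :
    WeaklyAverageRough X δ := by
  rintro V hV _ rfl ⟨f, hf, hfV⟩
  set U := {g : StrongDual ℝ X | ‖g‖ ≤ 1} ∩ {g | StrongDual.toWeakDual g ∈ V}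
  obtain ⟨E, hE, η, hη, hsub⟩ :=
    WeakDual.exists_dist_comp_subtypeL_lt_mem_of_mem_nhds (hV.mem_nhds hfV)
  have hU : Bornology.IsBounded U :=
    isBounded_closedBall.subset fun g hg => mem_closedBall_zero_iff.mpr hg.1
  have hmem : ∀ ε ∈ Set.Ioo 0 η, ∀ f' : StrongDual ℝ X, ‖f'‖ ≤ 1 + ε →
      (∀ x ∈ E, f' x = f x) → (1 + ε)⁻¹ • f' ∈ U := by
    rintro ε ⟨hε, hεη⟩ f' hf' hf'E
    refine ⟨?_, hsub ((1 + ε)⁻¹ • f') ?_⟩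
    · rw [Set.mem_ofPred_eq, norm_smul, Real.norm_of_nonneg (by positivity)]
      exact inv_mul_le_one_of_le₀ hf' (by positivity)
    · have hres : ((1 + ε)⁻¹ • f').comp E.subtypeL = (1 + ε)⁻¹ • f.comp E.subtypeL := by
        ext x; simp [hf'E x x.2]
      have hfE : ‖f.comp E.subtypeL‖ ≤ 1 :=
        (f.opNorm_comp_le _).trans (mul_le_one₀ hf (norm_nonneg _) E.norm_subtypeL_le)
      rw [hres]
      exact (dist_inv_one_add_smul_self_le (x := f.comp E.subtypeL) hfE hε.le).trans_lt hεη
  have hdiam : ∀ ε ∈ Set.Ioo 0 η, (δ - ε) / (1 + ε) ≤ diam U := by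
    intro ε hε
    have hε₀ := hε.1
    obtain ⟨f₁, f₂, hf₁, hf₂, y, hy, hagree, hfy⟩ := h E hE f hf ε hε₀
    have hdist := dist_le_diam_of_mem hU (hmem ε hε f₁ hf₁ fun x hx => (hagree x hx).1)
      (hmem ε hε f₂ hf₂ fun x hx => (hagree x hx).2)
    calc (δ - ε) / (1 + ε) ≤ (1 + ε)⁻¹ * (f₁ y - f₂ y) := by
          rw [div_eq_inv_mul]; gcongr
      _ = ((1 + ε)⁻¹ • f₁ - (1 + ε)⁻¹ • f₂) y := by simp [mul_sub]
      _ ≤ ‖(1 + ε)⁻¹ • f₁ - (1 + ε)⁻¹ • f₂‖ :=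
          (Real.le_norm_self _).trans (ContinuousLinearMap.unit_le_opNorm _ y hy.le)
      _ ≤ diam U := by rwa [← dist_eq_norm]
  have hlim : Tendsto (fun ε : ℝ => (δ - ε) / (1 + ε)) (𝓝[>] 0) (𝓝 δ) := by
    have : ContinuousAt (fun ε : ℝ => (δ - ε) / (1 + ε)) 0 := by fun_prop (disch := norm_num)
    simpa using this.tendsto.mono_left nhdsWithin_le_nhds
  exact le_of_tendsto hlim (eventually_of_mem (Ioo_mem_nhdsGT hη) hdiam)

end

theorem weaklyAverageRough_iff_extension_general
    (X : Type*) [NormedAddCommGroup X] [NormedSpace ℝ X] [Nontrivial X]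
    (δ : ℝ) :
    WeaklyAverageRough X δ ↔
      ∀ E : Submodule ℝ X, FiniteDimensional ℝ E →
        ∀ f : StrongDual ℝ X, ‖f‖ ≤ 1 →
          ∀ ε > (0 : ℝ), ∃ f₁ f₂ : StrongDual ℝ X,
            ‖f₁‖ ≤ 1 + ε ∧ ‖f₂‖ ≤ 1 + ε ∧ ∃ y : X, ‖y‖ = 1 ∧
              (∀ x ∈ E, f₁ x = f x ∧ f₂ x = f x) ∧ δ - ε < f₁ y - f₂ y :=
  ⟨fun h E _ f hf _ hε => h.exists_extension E f hf hε, weaklyAverageRough_of_exists_extension⟩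

theorem weaklyAverageRough_iff_extension
    (X : Type*) [NormedAddCommGroup X] [NormedSpace ℝ X] [CompleteSpace X] [Nontrivial X]
    (δ : ℝ) (hδ : 0 < δ) :
    WeaklyAverageRough X δ ↔
      ∀ E : Submodule ℝ X, FiniteDimensional ℝ E →
        ∀ f : StrongDual ℝ X, ‖f‖ ≤ 1 →
          ∀ ε > (0 : ℝ), ∃ f₁ f₂ : StrongDual ℝ X,
            ‖f₁‖ ≤ 1 + ε ∧ ‖f₂‖ ≤ 1 + ε ∧ ∃ y : X, ‖y‖ = 1 ∧
              (∀ x ∈ E, f₁ x = f x ∧ f₂ x = f x) ∧ δ - ε < f₁ y - f₂ y :=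
  weaklyAverageRough_iff_extension_general X δ
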